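/- arXiv:1912.11386 — 2 statements merged into one kernel-verified Lean document; each statement's English description precedes it below -/
import Mathlib

section
/- For any ring R and n ≥ 3, and any twosided ideal I of R, the relative elementary subgroup satisfies E_n(R,I) = [E_n(R), E_n(R,I)]. In particular, the elementary group E_n(R) is a perfect group. -/
open Matrix
open scoped commutatorElement

/-- An exchange ring: for every `x` there is an idempotent `e ∈ xR` with `1 - e ∈ (1-x)R`. -/
def IsExchangeRing (R : Type*) [Ring R] : Prop :=
  ∀ x : R, ∃ e r s : R, e * e = e ∧ e = x * r ∧ 1 - e = (1 - x) * s

/-- The elementary transvection `t_{ij}(x) = e + x e^{ij}` as an element of `GL n R`. -/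
def transv {n : ℕ} {R : Type*} [Ring R] (i j : Fin n) (hij : i ≠ j) (x : R) :
    (Matrix (Fin n) (Fin n) R)ˣ :=
  ⟨1 + Matrix.single i j x, 1 + Matrix.single i j (-x),
    by
      have h0 := (Matrix.single_mul_single_of_ne x i j i hij.symm (-x) :
        Matrix.single i j x * Matrix.single i j (-x) = 0)
      have h1 := (Matrix.single_mul_single_of_ne (-x) i j i hij.symm x :
        Matrix.single i j (-x) * Matrix.single i j x = 0)
      simp [mul_add, add_mul, h0, h1, ← Matrix.single_add, add_assoc],
    by
      have h0 := (Matrix.single_mul_single_of_ne x i j i hij.symm (-x) :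
        Matrix.single i j x * Matrix.single i j (-x) = 0)
      have h1 := (Matrix.single_mul_single_of_ne (-x) i j i hij.symm x :
        Matrix.single i j (-x) * Matrix.single i j x = 0)
      simp [mul_add, add_mul, h0, h1, ← Matrix.single_add, add_assoc]⟩

/-- The elementary subgroup `E_n(R)` of `GL_n(R)`. -/
def elemGroup (n : ℕ) (R : Type*) [Ring R] : Subgroup ((Matrix (Fin n) (Fin n) R)ˣ) :=
  Subgroup.closure { g | ∃ i j : Fin n, ∃ hij : i ≠ j, ∃ x : R, g = transv i j hij x }

/-- The preelementary subgroup `E_n(I)` of level a two-sided ideal `I`. -/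
def preElem (n : ℕ) (R : Type*) [Ring R] (I : TwoSidedIdeal R) : Subgroup ((Matrix (Fin n) (Fin n) R)ˣ) :=
  Subgroup.closure { g | ∃ i j : Fin n, ∃ hij : i ≠ j, ∃ x ∈ I, g = transv i j hij x }

/-- The relative elementary subgroup `E_n(R,I)`: the normal closure of `E_n(I)` in `E_n(R)`. -/
def relElem (n : ℕ) (R : Type*) [Ring R] (I : TwoSidedIdeal R) : Subgroup ((Matrix (Fin n) (Fin n) R)ˣ) :=
  Subgroup.closure { g | ∃ τ ∈ elemGroup n R, ∃ ε ∈ preElem n R I, g = τ⁻¹ * ε * τ }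

/-- The full congruence subgroup `C_n(R,I)`: preimage of the center of `GL_n(R/I)`. -/
def congrSubgroup (n : ℕ) (R : Type*) [Ring R] (I : TwoSidedIdeal R) :
    Subgroup ((Matrix (Fin n) (Fin n) R)ˣ) :=
  Subgroup.comap
    (Units.map ((RingHom.mapMatrix (RingCon.mk' I.ringCon)).toMonoidHom :
      Matrix (Fin n) (Fin n) R →* Matrix (Fin n) (Fin n) I.ringCon.Quotient))
    (Subgroup.center ((Matrix (Fin n) (Fin n) I.ringCon.Quotient)ˣ))

/-- `x` is a product of `m` `H`-conjugates of `a` and `a⁻¹`. -/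
def IsProdConj {G : Type*} [Group G] (H : Subgroup G) (a x : G) (m : ℕ) : Prop :=
  ∃ f : Fin m → G, (∀ k, ∃ h ∈ H, f k = h⁻¹ * a * h ∨ f k = h⁻¹ * a⁻¹ * h) ∧
    x = (List.ofFn f).prod

/-!
With a third index `k` (available since `n ≥ 3`), `t_ij(x) = [t_ik(x), t_kj(1)]`, so every generator
of `E_n(I)` is a commutator of an element of `E_n(I)` with one of `E_n(R)`. A generator `τ⁻¹ ε τ` of
`E_n(R,I)` is then `[τ⁻¹, ε] ε`, a product of two elements of `[E_n(R), E_n(R,I)]`. The reverse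
inclusion holds because `E_n(R)` normalises `E_n(R,I)`, and `E_n(R)` is the case `I = R`.
-/

section Elementary

variable {n : ℕ} {R : Type*} [Ring R]

lemma transv_commutator (i j k : Fin n) (hij : i ≠ j) (hik : i ≠ k) (hkj : k ≠ j) (x : R) :
    ⁅transv i k hik x, transv k j hkj 1⁆ = transv i j hij x := by
  ext a b
  simp only [commutatorElement_def, transv, Units.val_mul, Units.inv_mk]
  simp only [mul_add, mul_one, add_mul, one_mul, single_mul_single_same, ne_eq, hik.symm,
    not_false_eq_true, single_mul_single_of_ne, add_zero, hij.symm, mul_neg, hkj.symm, neg_neg,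
    Matrix.add_apply]
  simp only [Matrix.single, Matrix.of_apply, Matrix.one_apply]
  split_ifs <;> abel

lemma Fin.exists_ne_ne (hn : 3 ≤ n) (i j : Fin n) : ∃ k : Fin n, i ≠ k ∧ k ≠ j := by
  obtain ⟨k, hk⟩ : (({i, j} : Finset (Fin n))ᶜ).Nonempty := by
    rw [← Finset.card_pos, Finset.card_compl, Fintype.card_fin]
    have := Finset.card_le_two (a := i) (b := j)
    omega
  simp only [Finset.mem_compl, Finset.mem_insert, Finset.mem_singleton, not_or] at hk
  exact ⟨k, Ne.symm hk.1, hk.2⟩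

lemma transv_mem_elemGroup (i j : Fin n) (hij : i ≠ j) (x : R) :
    transv i j hij x ∈ elemGroup n R :=
  Subgroup.subset_closure ⟨i, j, hij, x, rfl⟩

lemma transv_mem_preElem {I : TwoSidedIdeal R} (i j : Fin n) (hij : i ≠ j) {x : R} (hx : x ∈ I) :
    transv i j hij x ∈ preElem n R I :=
  Subgroup.subset_closure ⟨i, j, hij, x, hx, rfl⟩

lemma preElem_top : preElem n R ⊤ = elemGroup n R := by
  simp only [preElem, elemGroup, TwoSidedIdeal.mem_top, true_and]

lemma preElem_le_relElem (I : TwoSidedIdeal R) : preElem n R I ≤ relElem n R I :=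
  (Subgroup.closure_le _).2 fun g hg ↦
    Subgroup.subset_closure ⟨1, one_mem _, g, Subgroup.subset_closure hg, by simp⟩

lemma preElem_le_commutator (hn : 3 ≤ n) (I : TwoSidedIdeal R) :
    preElem n R I ≤ ⁅preElem n R I, elemGroup n R⁆ := by
  refine (Subgroup.closure_le _).2 ?_
  rintro _ ⟨i, j, hij, x, hx, rfl⟩
  obtain ⟨k, hik, hkj⟩ := Fin.exists_ne_ne hn i j
  rw [← transv_commutator i j k hij hik hkj x]
  exact Subgroup.commutator_mem_commutator (transv_mem_preElem i k hik hx)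
    (transv_mem_elemGroup k j hkj 1)

lemma elemGroup_le_normalizer_relElem (I : TwoSidedIdeal R) :
    elemGroup n R ≤ Subgroup.normalizer (relElem n R I : Set _) := by
  refine Subgroup.le_normalizer_closure_iff.2 ?_
  rintro σ hσ _ ⟨τ, hτ, ε, hε, rfl⟩
  exact Subgroup.subset_closure ⟨τ * σ⁻¹, mul_mem hτ (inv_mem hσ), ε, hε, by group⟩

lemma relElem_le_commutator (hn : 3 ≤ n) (I : TwoSidedIdeal R) :
    relElem n R I ≤ ⁅elemGroup n R, relElem n R I⁆ := by
  have hpre : preElem n R I ≤ ⁅elemGroup n R, relElem n R I⁆ := by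
    rw [Subgroup.commutator_comm]
    exact (preElem_le_commutator hn I).trans
      (Subgroup.commutator_mono (preElem_le_relElem I) le_rfl)
  refine (Subgroup.closure_le _).2 ?_
  rintro _ ⟨τ, hτ, ε, hε, rfl⟩
  rw [show τ⁻¹ * ε * τ = ⁅τ⁻¹, ε⁆ * ε by group]
  exact mul_mem (Subgroup.commutator_mem_commutator (inv_mem hτ) (preElem_le_relElem I hε))
    (hpre hε)

end Elementary

theorem relElem_eq_commutator {n : ℕ} (R : Type*) [Ring R] (hn : 3 ≤ n) :
    (∀ I : TwoSidedIdeal R, relElem n R I = ⁅elemGroup n R, relElem n R I⁆) ∧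
    ⁅elemGroup n R, elemGroup n R⁆ = elemGroup n R := by
  refine ⟨fun I ↦ le_antisymm (relElem_le_commutator hn I) ?_, ?_⟩
  · exact Subgroup.le_normalizer_iff_commutator_le_right.1 (elemGroup_le_normalizer_relElem I)
  · refine le_antisymm (Subgroup.commutator_le_self _) ?_
    simpa only [preElem_top] using preElem_le_commutator hn (⊤ : TwoSidedIdeal R)
end

section
/- Let G be a group and (a_1,b_1), (a_2,b_2) ∈ G × G with a_2 = [a_1^{-1}, g] and b_2 = [g, b_1] for some g in G. Then a_2 b_2 = (a_1 b_1)^{g^{-1} a_1} · ((a_1 b_1)^{-1})^{a_1}; in particular a_2 b_2 is a product of 2 conjugates of a_1 b_1 and (a_1 b_1)^{-1} by elements of the subgroup generated by a_1 and g. -/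
open Matrix

open scoped commutatorElement

section

variable {G : Type*} [Group G]

theorem commutatorElement_inv_mul_commutatorElement (a b g : G) :
    ⁅a⁻¹, g⁆ * ⁅g, b⁆ = (g⁻¹ * a)⁻¹ * (a * b) * (g⁻¹ * a) * (a⁻¹ * (a * b)⁻¹ * a) := by
  simp only [commutatorElement_def]
  group

theorem isProdConj_zero (H : Subgroup G) (a : G) : IsProdConj H a 1 0 :=
  ⟨Fin.elim0, fun k => k.elim0, rfl⟩

theorem IsProdConj.conj_mul {H : Subgroup G} {a x c : G} {m : ℕ} (hx : IsProdConj H a x m)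
    (hc : ∃ h ∈ H, c = h⁻¹ * a * h ∨ c = h⁻¹ * a⁻¹ * h) : IsProdConj H a (c * x) (m + 1) := by
  obtain ⟨f, hf, rfl⟩ := hx
  refine ⟨Fin.cons c f, Fin.cases hc hf, ?_⟩
  simp [List.ofFn_succ]

end

open scoped commutatorElement in
theorem reduction_lemma_base {G : Type*} [Group G] (a₁ b₁ a₂ b₂ g : G)
    (ha : a₂ = ⁅a₁⁻¹, g⁆) (hb : b₂ = ⁅g, b₁⁆) :
    a₂ * b₂ = (g⁻¹ * a₁)⁻¹ * (a₁ * b₁) * (g⁻¹ * a₁) * (a₁⁻¹ * (a₁ * b₁)⁻¹ * a₁) ∧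
    IsProdConj (Subgroup.closure {a₁, g}) (a₁ * b₁) (a₂ * b₂) 2 := by
  have ha₁ : a₁ ∈ Subgroup.closure ({a₁, g} : Set G) := Subgroup.subset_closure (by simp)
  have hg : g ∈ Subgroup.closure ({a₁, g} : Set G) := Subgroup.subset_closure (by simp)
  subst ha hb
  rw [commutatorElement_inv_mul_commutatorElement]
  refine ⟨rfl, ?_⟩
  simpa only [mul_one] using ((isProdConj_zero _ _).conj_mul ⟨a₁, ha₁, Or.inr rfl⟩).conj_mul
    ⟨g⁻¹ * a₁, mul_mem (inv_mem hg) ha₁, Or.inl rfl⟩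
end
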